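/- The Minkowski–Stieltjes measure μ is the Bernoulli measure for the Gauss map with weights (2^{-k})_{k≥1}: for any finite sequence of positive integers (a_1,…,a_n), the cylinder set of x ∈ (0,1) whose first n continued fraction partial quotients are a_1,…,a_n has μ-measure 2^{-(a_1+⋯+a_n)}. -/

import Mathlib

/-!
Write `cfVal [a₁, …, aₙ] t = [0; a₁, …, aₙ + t]`. The cylinder of `[a₁, …, aₙ]` is the image of
`[0, 1)` under `cfVal l`, so up to its endpoints it is the interval between `cfVal l 0` and
`cfVal l 1`. Salem's series satisfies `?((a + y)⁻¹) = 2^{1-a} - 2^{-a} ?(y)` for `y ∈ [0, 1]`, hence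
`?(cfVal l t) - ?(cfVal l s) = ± 2^{-(a₁+⋯+aₙ)} (?(t) - ?(s))` and the interval has mass
`2^{-(a₁+⋯+aₙ)}`. The endpoints are rational, and every rational in `(0, 1]` is `cfVal l 0` for
some `l` of odd length; then `cfVal l` is decreasing and the points `cfVal l (1/k)` approach
`cfVal l 0` from the left with `?`-gaps `2^{1-k-(a₁+⋯+aₙ)}`, so the endpoints carry no mass.
-/

open MeasureTheory Set

/-- The Gauss map `x ↦ 1/x mod 1` (with `0 ↦ 0`). -/
noncomputable def gaussMap (x : ℝ) : ℝ := if x = 0 then 0 else Int.fract x⁻¹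

/-- The `(k+1)`-st continued fraction partial quotient `a_{k+1}(x)`. -/
noncomputable def cfDigit (k : ℕ) (x : ℝ) : ℕ := ⌊(gaussMap^[k] x)⁻¹⌋₊

/-- `cfSum n x = a_1(x) + ⋯ + a_n(x)`. -/
noncomputable def cfSum (n : ℕ) (x : ℝ) : ℕ := ∑ i ∈ Finset.range n, cfDigit i x

/-- Minkowski's question mark function, defined by Salem's series
`?(x) = Σ_{k≥1} (-1)^{k-1} 2^{1-(a_1+⋯+a_k)}`, which is a finite sum for rational `x`
(the terms are cut off once the Gauss-map orbit reaches `0`). -/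
noncomputable def mink (x : ℝ) : ℝ :=
  ∑' k : ℕ, if gaussMap^[k] x = 0 then 0 else
    (-1 : ℝ) ^ k * (2 : ℝ) ^ ((1 : ℤ) - (cfSum (k + 1) x : ℤ))

open Filter Topology

@[simp] lemma gaussMap_zero : gaussMap 0 = 0 := if_pos rfl

@[simp] lemma gaussMap_iterate_zero (n : ℕ) : gaussMap^[n] 0 = 0 :=
  Function.iterate_fixed gaussMap_zero n

lemma gaussMap_mem_Ico (x : ℝ) : gaussMap x ∈ Ico 0 1 := by
  unfold gaussMap
  split_ifs
  · simp
  · exact ⟨Int.fract_nonneg _, Int.fract_lt_one _⟩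

lemma mapsTo_gaussMap_iterate (n : ℕ) : MapsTo gaussMap^[n] (Ico 0 1) (Ico 0 1) :=
  MapsTo.iterate (fun x _ => gaussMap_mem_Ico x) n

lemma gaussMap_inv_natCast_add (a : ℕ) (y : ℝ) : gaussMap ((a : ℝ) + y)⁻¹ = Int.fract y := by
  unfold gaussMap
  split_ifs with h
  · obtain rfl : y = -a := by linarith [inv_eq_zero.1 h]
    rw [← Int.cast_natCast, ← Int.cast_neg, Int.fract_intCast]
  · rw [inv_inv, Int.fract_natCast_add]

lemma cfDigit_succ (i : ℕ) (x : ℝ) : cfDigit (i + 1) x = cfDigit i (gaussMap x) := by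
  simp only [cfDigit, Function.iterate_succ_apply]

@[simp] lemma cfDigit_zero_zero : cfDigit 0 0 = 0 := by simp [cfDigit]

lemma cfDigit_zero_inv_natCast_add (a : ℕ) {y : ℝ} (hy : y ∈ Ico 0 1) :
    cfDigit 0 ((a : ℝ) + y)⁻¹ = a := by
  rw [cfDigit, Function.iterate_zero_apply, inv_inv, add_comm, Nat.floor_add_natCast hy.1,
    Nat.floor_eq_zero.2 hy.2, zero_add]

lemma one_le_cfDigit {i : ℕ} {x : ℝ} (h : gaussMap^[i] x ∈ Ioc 0 1) : 1 ≤ cfDigit i x :=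
  Nat.le_floor (by simpa using one_le_inv₀ h.1 |>.2 h.2)

lemma inv_cfDigit_zero_add_gaussMap {x : ℝ} (hx : 0 < x) :
    ((cfDigit 0 x : ℝ) + gaussMap x)⁻¹ = x := by
  rw [cfDigit, Function.iterate_zero_apply, gaussMap, if_neg hx.ne',
    natCast_floor_eq_intCast_floor (inv_pos.2 hx).le, Int.floor_add_fract, inv_inv]

noncomputable def minkTerm (x : ℝ) (k : ℕ) : ℝ :=
  if gaussMap^[k] x = 0 then 0 else (-1 : ℝ) ^ k * (2 : ℝ) ^ ((1 : ℤ) - (cfSum (k + 1) x : ℤ))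

lemma mink_eq_tsum_minkTerm (x : ℝ) : mink x = ∑' k, minkTerm x k := rfl

lemma cfSum_succ (k : ℕ) (x : ℝ) : cfSum (k + 1) x = cfDigit 0 x + cfSum k (gaussMap x) := by
  simp only [cfSum, Finset.sum_range_succ', cfDigit_succ, add_comm]

lemma succ_le_cfSum {y : ℝ} (hy : y ∈ Ico 0 1) {k : ℕ} (hk : gaussMap^[k] y ≠ 0) :
    k + 1 ≤ cfSum (k + 1) y := by
  have hdigit : ∀ i ∈ Finset.range (k + 1), 1 ≤ cfDigit i y := by
    intro i hi
    have hne : gaussMap^[i] y ≠ 0 := by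
      intro h
      obtain ⟨j, rfl⟩ := Nat.exists_eq_add_of_le (Finset.mem_range_succ_iff.1 hi)
      rw [add_comm, Function.iterate_add_apply, h, gaussMap_iterate_zero] at hk
      exact hk rfl
    have hmem := mapsTo_gaussMap_iterate i hy
    exact one_le_cfDigit ⟨lt_of_le_of_ne hmem.1 hne.symm, hmem.2.le⟩
  calc k + 1 = ∑ _i ∈ Finset.range (k + 1), 1 := by simp
    _ ≤ cfSum (k + 1) y := Finset.sum_le_sum hdigit

lemma abs_minkTerm_le {y : ℝ} (hy : y ∈ Ico 0 1) (k : ℕ) : |minkTerm y k| ≤ 2⁻¹ ^ k := by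
  unfold minkTerm
  split_ifs with hk
  · simp
  · have hsum : ((k : ℤ) + 1) ≤ cfSum (k + 1) y := by exact_mod_cast succ_le_cfSum hy hk
    rw [abs_mul, abs_pow, abs_neg, abs_one, one_pow, one_mul, abs_of_pos (by positivity),
      inv_pow, ← zpow_natCast, ← zpow_neg]
    exact zpow_le_zpow_right₀ one_le_two (by omega)

lemma summable_minkTerm {y : ℝ} (hy : y ∈ Ico 0 1) : Summable (minkTerm y) :=
  Summable.of_norm_bounded (summable_geometric_of_lt_one (by norm_num) (by norm_num))
    (abs_minkTerm_le hy)

lemma minkTerm_zero {x : ℝ} (hx : x ≠ 0) : minkTerm x 0 = 2 * 2⁻¹ ^ cfDigit 0 x := by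
  rw [minkTerm, Function.iterate_zero_apply, if_neg hx, cfSum_succ, cfSum,
    Finset.sum_range_zero, add_zero, pow_zero, one_mul, zpow_sub₀ two_ne_zero, zpow_one,
    zpow_natCast, div_eq_mul_inv, inv_pow]

lemma minkTerm_succ (x : ℝ) (k : ℕ) :
    minkTerm x (k + 1) = -(2⁻¹ ^ cfDigit 0 x * minkTerm (gaussMap x) k) := by
  unfold minkTerm
  rw [Function.iterate_succ_apply]
  by_cases h : gaussMap^[k] (gaussMap x) = 0
  · rw [if_pos h, if_pos h, mul_zero, neg_zero]
  · rw [if_neg h, if_neg h, cfSum_succ, Nat.cast_add, sub_add_eq_sub_sub_swap,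
      zpow_sub₀ two_ne_zero, zpow_natCast, inv_pow, pow_succ]
    ring

lemma mink_eq_of_ne_zero {x : ℝ} (hx : x ≠ 0) :
    mink x = 2 * 2⁻¹ ^ cfDigit 0 x - 2⁻¹ ^ cfDigit 0 x * mink (gaussMap x) := by
  have hsummable := ((summable_minkTerm (gaussMap_mem_Ico x)).mul_left
    (2⁻¹ ^ cfDigit 0 x)).neg
  rw [mink_eq_tsum_minkTerm, tsum_eq_zero_add' (by simpa only [minkTerm_succ] using hsummable),
    minkTerm_zero hx, mink_eq_tsum_minkTerm]
  simp only [minkTerm_succ, tsum_neg, tsum_mul_left, sub_eq_add_neg]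

@[simp] lemma mink_zero : mink 0 = 0 := by
  simp [mink]

@[simp] lemma mink_one : mink 1 = 1 := by
  have hdigit : cfDigit 0 1 = 1 := by simp [cfDigit]
  have hgauss : gaussMap 1 = 0 := by simp [gaussMap]
  rw [mink_eq_of_ne_zero one_ne_zero, hdigit, hgauss]
  norm_num

lemma mink_inv_natCast_add (a : ℕ) {y : ℝ} (hy : y ∈ Icc 0 1) (hay : (a : ℝ) + y ≠ 0) :
    mink ((a : ℝ) + y)⁻¹ = 2 * 2⁻¹ ^ a - 2⁻¹ ^ a * mink y := by
  rw [mink_eq_of_ne_zero (inv_ne_zero hay), gaussMap_inv_natCast_add]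
  rcases hy.2.lt_or_eq with hy1 | rfl
  · rw [cfDigit_zero_inv_natCast_add a ⟨hy.1, hy1⟩, Int.fract_eq_self.2 ⟨hy.1, hy1⟩]
  · -- The Gauss map reads `(a + 1)⁻¹` as `[a + 1]`, not `[a, 1]`; the formula survives
    -- because `?(1) = 1`.
    have : ((a : ℝ) + 1)⁻¹ = (((a + 1 : ℕ) : ℝ) + 0)⁻¹ := by push_cast; ring_nf
    rw [this, cfDigit_zero_inv_natCast_add (a + 1) ⟨le_rfl, one_pos⟩]
    simp only [Int.fract_one, mink_zero, mink_one, pow_succ]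
    ring

section ContinuedFractions

/-- `cfVal [a₁, …, aₙ] t = 1 / (a₁ + 1 / (a₂ + ⋯ + 1 / (aₙ + t)))`. -/
noncomputable def cfVal (l : List ℕ) (t : ℝ) : ℝ :=
  l.foldr (fun (a : ℕ) (y : ℝ) => ((a : ℝ) + y)⁻¹) t

def cfCylinder (l : List ℕ) : Set ℝ :=
  {x | x ∈ Ioo 0 1 ∧ ∀ i (hi : i < l.length), cfDigit i x = l[i]}

@[simp] lemma cfVal_nil (t : ℝ) : cfVal [] t = t := rfl

@[simp] lemma cfVal_cons (a : ℕ) (l : List ℕ) (t : ℝ) :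
    cfVal (a :: l) t = ((a : ℝ) + cfVal l t)⁻¹ := rfl

lemma cfVal_append (l m : List ℕ) (t : ℝ) : cfVal (l ++ m) t = cfVal l (cfVal m t) := by
  simp only [cfVal, List.foldr_append]

lemma cfVal_nonneg (l : List ℕ) {t : ℝ} (ht : 0 ≤ t) : 0 ≤ cfVal l t := by
  induction l with
  | nil => exact ht
  | cons a m ih => exact inv_nonneg.2 (add_nonneg a.cast_nonneg ih)

variable {l : List ℕ}

lemma cfVal_mem_Icc (hl : ∀ a ∈ l, 1 ≤ a) {t : ℝ} (ht : t ∈ Icc 0 1) : cfVal l t ∈ Icc 0 1 := by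
  induction l with
  | nil => exact ht
  | cons a m ih =>
    have ha : (1 : ℝ) ≤ a := by exact_mod_cast hl a List.mem_cons_self
    have hm := ih fun b hb => hl b (List.mem_cons_of_mem a hb)
    rw [cfVal_cons]
    exact ⟨inv_nonneg.2 (by linarith [hm.1]), inv_le_one_of_one_le₀ (by linarith [hm.1])⟩

lemma continuousOn_cfVal (hl : ∀ a ∈ l, 1 ≤ a) : ContinuousOn (cfVal l) (Ici 0) := by
  induction l with
  | nil => exact continuousOn_id
  | cons a m ih =>
    have ha : (1 : ℝ) ≤ a := by exact_mod_cast hl a List.mem_cons_self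
    refine (continuousOn_const.add (ih fun b hb => hl b (List.mem_cons_of_mem a hb))).inv₀ ?_
    intro t ht
    show (a : ℝ) + cfVal m t ≠ 0
    linarith [cfVal_nonneg m (mem_Ici.1 ht)]

lemma strictAntiOn_inv_natCast_add {a : ℕ} (ha : 1 ≤ a) :
    StrictAntiOn (fun y : ℝ => ((a : ℝ) + y)⁻¹) (Ici 0) := by
  have ha' : (1 : ℝ) ≤ a := by exact_mod_cast ha
  intro y hy z _ hyz
  have hy' : 0 ≤ y := hy
  exact inv_strictAntiOn (mem_Ioi.2 (by linarith)) (mem_Ioi.2 (by linarith)) (by linarith)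

lemma strictMonoOn_cfVal (hl : ∀ a ∈ l, 1 ≤ a) :
    (Even l.length → StrictMonoOn (cfVal l) (Ici 0)) ∧
      (Odd l.length → StrictAntiOn (cfVal l) (Ici 0)) := by
  induction l with
  | nil => exact ⟨fun _ => strictMonoOn_id, fun h => absurd h (by simp)⟩
  | cons a m ih =>
    obtain ⟨heven, hodd⟩ := ih fun b hb => hl b (List.mem_cons_of_mem a hb)
    have hstep := strictAntiOn_inv_natCast_add (hl a List.mem_cons_self)
    have hmaps : MapsTo (cfVal m) (Ici 0) (Ici 0) := fun t ht => cfVal_nonneg m ht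
    rw [List.length_cons, Nat.even_add_one, Nat.not_even_iff_odd, Nat.odd_add_one,
      Nat.not_odd_iff_even]
    exact ⟨fun h => hstep.comp (hodd h) hmaps, fun h => hstep.comp_strictMonoOn (heven h) hmaps⟩

lemma cfVal_mem_uIcc (hl : ∀ a ∈ l, 1 ≤ a) {t : ℝ} (ht : t ∈ Icc 0 1) :
    cfVal l t ∈ uIcc (cfVal l 0) (cfVal l 1) := by
  have h0 : (0 : ℝ) ∈ Ici 0 := mem_Ici.2 le_rfl
  have h1 : (1 : ℝ) ∈ Ici 0 := mem_Ici.2 zero_le_one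
  rcases Nat.even_or_odd l.length with he | ho
  · have hmono := ((strictMonoOn_cfVal hl).1 he).monotoneOn
    exact mem_uIcc_of_le (hmono h0 ht.1 ht.1) (hmono ht.1 h1 ht.2)
  · have hanti := ((strictMonoOn_cfVal hl).2 ho).antitoneOn
    exact mem_uIcc_of_ge (hanti ht.1 h1 ht.2) (hanti h0 ht.1 ht.1)

lemma mem_cfCylinder_cfVal (hl : ∀ a ∈ l, 1 ≤ a) {t : ℝ} (ht : t ∈ Ioo 0 1) :
    cfVal l t ∈ cfCylinder l := by
  induction l with
  | nil => exact ⟨ht, fun i hi => absurd hi (Nat.not_lt_zero i)⟩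
  | cons a m ih =>
    obtain ⟨⟨hy0, hy1⟩, hdigits⟩ := ih fun b hb => hl b (List.mem_cons_of_mem a hb)
    have ha : (1 : ℝ) ≤ a := by exact_mod_cast hl a List.mem_cons_self
    refine ⟨?_, fun i hi => ?_⟩
    · rw [cfVal_cons]
      exact ⟨inv_pos.2 (by linarith), inv_lt_one_of_one_lt₀ (by linarith)⟩
    cases i with
    | zero => exact cfDigit_zero_inv_natCast_add a ⟨hy0.le, hy1⟩
    | succ i =>
      rw [cfVal_cons, cfDigit_succ, gaussMap_inv_natCast_add, Int.fract_eq_self.2 ⟨hy0.le, hy1⟩]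
      exact hdigits i (Nat.lt_of_succ_lt_succ hi)

lemma cfVal_gaussMap_iterate (hl : ∀ a ∈ l, 1 ≤ a) {x : ℝ} (hx : 0 ≤ x)
    (hdigits : ∀ i (hi : i < l.length), cfDigit i x = l[i]) :
    cfVal l (gaussMap^[l.length] x) = x := by
  induction l generalizing x with
  | nil => rfl
  | cons a m ih =>
    have ha : cfDigit 0 x = a := hdigits 0 (Nat.succ_pos _)
    have hx0 : x ≠ 0 := by
      rintro rfl
      have := hl a List.mem_cons_self
      rw [cfDigit_zero_zero] at ha
      omega
    have hm := ih (fun b hb => hl b (List.mem_cons_of_mem a hb)) (gaussMap_mem_Ico x).1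
      fun i hi => by rw [← cfDigit_succ]; exact hdigits (i + 1) (Nat.succ_lt_succ hi)
    rw [List.length_cons, Function.iterate_succ_apply, cfVal_cons, hm, ← ha]
    exact inv_cfDigit_zero_add_gaussMap (hx.lt_of_ne' hx0)

lemma cfCylinder_subset_uIcc (hl : ∀ a ∈ l, 1 ≤ a) :
    cfCylinder l ⊆ uIcc (cfVal l 0) (cfVal l 1) := by
  rintro x ⟨hx, hdigits⟩
  have ht := mapsTo_gaussMap_iterate l.length ⟨hx.1.le, hx.2⟩
  rw [← cfVal_gaussMap_iterate hl hx.1.le hdigits]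
  exact cfVal_mem_uIcc hl ⟨ht.1, ht.2.le⟩

lemma uIoo_subset_cfCylinder (hl : ∀ a ∈ l, 1 ≤ a) :
    uIoo (cfVal l 0) (cfVal l 1) ⊆ cfCylinder l := by
  intro x hx
  have hcont : ContinuousOn (cfVal l) (uIcc 0 1) :=
    (continuousOn_cfVal hl).mono fun t ht => by
      rw [uIcc_of_le zero_le_one] at ht; exact ht.1
  obtain ⟨t, ht, rfl⟩ := intermediate_value_uIcc hcont (uIoo_subset_uIcc_self hx)
  rw [uIcc_of_le zero_le_one] at ht
  have ht0 : t ≠ 0 := by rintro rfl; exact left_notMem_uIoo hx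
  have ht1 : t ≠ 1 := by rintro rfl; exact right_notMem_uIoo hx
  exact mem_cfCylinder_cfVal hl ⟨lt_of_le_of_ne ht.1 (Ne.symm ht0), lt_of_le_of_ne ht.2 ht1⟩

end ContinuedFractions

section MinkAlongContinuedFractions

variable {l : List ℕ}

lemma mink_cfVal_sub_mink_cfVal (hl : ∀ a ∈ l, 1 ≤ a) {s t : ℝ} (hs : s ∈ Icc 0 1)
    (ht : t ∈ Icc 0 1) :
    mink (cfVal l t) - mink (cfVal l s) = (-1) ^ l.length * 2⁻¹ ^ l.sum * (mink t - mink s) := by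
  induction l with
  | nil => simp
  | cons a m ih =>
    have hm : ∀ b ∈ m, 1 ≤ b := fun b hb => hl b (List.mem_cons_of_mem a hb)
    have ha : (1 : ℝ) ≤ a := by exact_mod_cast hl a List.mem_cons_self
    have hne : ∀ {u : ℝ}, u ∈ Icc 0 1 → (a : ℝ) + cfVal m u ≠ 0 := fun hu => by
      linarith [(cfVal_mem_Icc hm hu).1]
    rw [cfVal_cons, cfVal_cons, mink_inv_natCast_add a (cfVal_mem_Icc hm ht) (hne ht),
      mink_inv_natCast_add a (cfVal_mem_Icc hm hs) (hne hs), List.length_cons, List.sum_cons,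
      pow_succ, pow_add]
    linear_combination (-(2⁻¹ : ℝ) ^ a) * ih hm

lemma mink_cfVal_mem_Icc (hl : ∀ a ∈ l, 1 ≤ a) {t : ℝ} (ht : t ∈ Icc 0 1)
    (hmt : mink t ∈ Icc 0 1) : mink (cfVal l t) ∈ Icc 0 1 := by
  induction l with
  | nil => exact hmt
  | cons a m ih =>
    have hm : ∀ b ∈ m, 1 ≤ b := fun b hb => hl b (List.mem_cons_of_mem a hb)
    have ha : (1 : ℝ) ≤ a := by exact_mod_cast hl a List.mem_cons_self
    obtain ⟨hM0, hM1⟩ := ih hm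
    have hc0 : (0 : ℝ) < 2⁻¹ ^ a := by positivity
    have hc1 : (2⁻¹ : ℝ) ^ a ≤ 2⁻¹ :=
      pow_le_of_le_one (by norm_num) (by norm_num) (by have := hl a List.mem_cons_self; omega)
    rw [cfVal_cons, mink_inv_natCast_add a (cfVal_mem_Icc hm ht)
      (by linarith [(cfVal_mem_Icc hm ht).1])]
    constructor <;> nlinarith

lemma mink_inv_natCast_succ (k : ℕ) : mink ((k + 1 : ℕ) : ℝ)⁻¹ = 2⁻¹ ^ k := by
  rw [← add_zero ((k + 1 : ℕ) : ℝ), mink_inv_natCast_add (k + 1) ⟨le_rfl, zero_le_one⟩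
    (by positivity), mink_zero, pow_succ]
  ring

lemma cfVal_pair_one (b : ℕ) : cfVal [b, 1] 0 = cfVal [b + 1] 0 := by
  simp

lemma exists_odd_length_cfVal_eq (hl : ∀ a ∈ l, 1 ≤ a) (hne : l ≠ []) :
    ∃ l' : List ℕ, (∀ a ∈ l', 1 ≤ a) ∧ Odd l'.length ∧ cfVal l' 0 = cfVal l 0 := by
  rcases Nat.even_or_odd l.length with he | ho
  swap
  · exact ⟨l, hl, ho, rfl⟩
  obtain ⟨init, c, rfl⟩ := (List.eq_nil_or_concat' l).resolve_left hne
  have hinit : ∀ a ∈ init, 1 ≤ a := fun a ha => hl a (List.mem_append_left _ ha)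
  have hodd : Odd init.length := by
    simpa [Nat.even_add_one] using he
  -- `[…, d + 1] = […, d, 1]`; if `d = 0`, use `[…, b, 1] = […, b + 1]` instead.
  obtain ⟨d, rfl⟩ : ∃ d, c = d + 1 := Nat.exists_eq_add_one.2 (hl c (by simp))
  rcases Nat.eq_zero_or_pos d with rfl | hd
  · obtain ⟨init', b, rfl⟩ := (List.eq_nil_or_concat' init).resolve_left
      (by rintro rfl; simp at hodd)
    refine ⟨init' ++ [b + 1], ?_, ?_, ?_⟩
    · intro a ha
      rcases List.mem_append.1 ha with ha | ha
      · exact hinit a (List.mem_append_left _ ha)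
      · simp only [List.mem_singleton] at ha; omega
    · simpa [Nat.odd_add_one] using hodd
    · rw [List.append_assoc, cfVal_append, cfVal_append, List.singleton_append, cfVal_pair_one]
  · refine ⟨init ++ [d, 1], ?_, ?_, ?_⟩
    · intro a ha
      rcases List.mem_append.1 ha with ha | ha
      · exact hinit a ha
      · simp only [List.mem_cons, List.not_mem_nil, or_false] at ha; omega
    · simpa [Nat.odd_add_one] using hodd
    · rw [cfVal_append, cfVal_append, cfVal_pair_one]

end MinkAlongContinuedFractions

lemma measure_eq_measure_uIoc_of_uIoo_subset {α : Type*} [MeasurableSpace α] [LinearOrder α]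
    {μ : Measure α} {s : Set α} {u v : α} (h₁ : uIoo u v ⊆ s) (h₂ : s ⊆ uIcc u v)
    (hu : μ {u} = 0) (hv : μ {v} = 0) : μ s = μ (uIoc u v) := by
  wlog huv : u ≤ v generalizing u v
  · rw [uIoc_comm]
    rw [uIoo_comm] at h₁
    rw [uIcc_comm] at h₂
    exact this h₁ h₂ hv hu (le_of_not_ge huv)
  rw [uIoo_of_le huv] at h₁
  rw [uIcc_of_le huv] at h₂
  rw [uIoc_of_le huv]
  apply le_antisymm
  · calc μ s ≤ μ (Icc u v) := measure_mono h₂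
      _ = μ (Ioc u v) := (measure_congr (Ioc_ae_eq_Icc' hu)).symm
  · calc μ (Ioc u v) = μ (Ioo u v) := (measure_congr (Ioo_ae_eq_Ioc' hv)).symm
      _ ≤ μ s := measure_mono h₁

section MinkCDF

def HasMinkCDF (μ : Measure ℝ) : Prop :=
  ∀ x ∈ Icc (0 : ℝ) 1, μ (Icc 0 x) = ENNReal.ofReal (mink x)

variable {μ : Measure ℝ} {l : List ℕ}

lemma HasMinkCDF.measure_Ioc (hμ : HasMinkCDF μ) {s t : ℝ} (hs : 0 ≤ s) (hst : s ≤ t)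
    (ht : t ≤ 1) (hms : 0 ≤ mink s) : μ (Ioc s t) = ENNReal.ofReal (mink t - mink s) := by
  have hadd : μ (Icc 0 s) + μ (Ioc s t) = μ (Icc 0 t) := by
    rw [← measure_union ((Iic_disjoint_Ioc le_rfl).mono_left Icc_subset_Iic_self)
      measurableSet_Ioc, Icc_union_Ioc_eq_Icc hs hst]
  rw [hμ s ⟨hs, hst.trans ht⟩, hμ t ⟨hs.trans hst, ht⟩, add_comm] at hadd
  rw [ENNReal.ofReal_sub _ hms]
  exact ENNReal.eq_sub_of_add_eq ENNReal.ofReal_ne_top hadd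

lemma HasMinkCDF.measure_singleton_cfVal_zero_of_odd (hμ : HasMinkCDF μ)
    (hl : ∀ a ∈ l, 1 ≤ a) (ho : Odd l.length) : μ {cfVal l 0} = 0 := by
  have h0 : (0 : ℝ) ∈ Icc 0 1 := ⟨le_rfl, zero_le_one⟩
  have hbound : ∀ k : ℕ, μ {cfVal l 0} ≤ ENNReal.ofReal (2⁻¹ ^ l.sum * 2⁻¹ ^ k) := by
    intro k
    have ht : ((k + 1 : ℕ) : ℝ)⁻¹ ∈ Icc 0 1 :=
      ⟨by positivity, inv_le_one_of_one_le₀ (by simp)⟩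
    have hmt := mink_inv_natCast_succ k
    have hlt : cfVal l ((k + 1 : ℕ) : ℝ)⁻¹ < cfVal l 0 :=
      (strictMonoOn_cfVal hl).2 ho h0.1 ht.1 (by positivity)
    calc μ {cfVal l 0} ≤ μ (Ioc (cfVal l ((k + 1 : ℕ) : ℝ)⁻¹) (cfVal l 0)) :=
          measure_mono (singleton_subset_iff.2 ⟨hlt, le_rfl⟩)
      _ = ENNReal.ofReal (mink (cfVal l 0) - mink (cfVal l ((k + 1 : ℕ) : ℝ)⁻¹)) :=
          hμ.measure_Ioc (cfVal_nonneg l ht.1) hlt.le (cfVal_mem_Icc hl h0).2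
            (mink_cfVal_mem_Icc hl ht (by rw [hmt]; exact ⟨by positivity, pow_le_one₀
              (by norm_num) (by norm_num)⟩)).1
      _ = ENNReal.ofReal (2⁻¹ ^ l.sum * 2⁻¹ ^ k) := by
          rw [mink_cfVal_sub_mink_cfVal hl ht h0, ho.neg_one_pow, mink_zero, hmt]
          ring_nf
  have hlim : Tendsto (fun k : ℕ => ENNReal.ofReal (2⁻¹ ^ l.sum * 2⁻¹ ^ k)) atTop (𝓝 0) := by
    rw [← ENNReal.ofReal_zero, ← mul_zero ((2⁻¹ : ℝ) ^ l.sum)]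
    exact ENNReal.tendsto_ofReal
      ((tendsto_pow_atTop_nhds_zero_of_lt_one (by norm_num) (by norm_num)).const_mul _)
  exact nonpos_iff_eq_zero.1 (ge_of_tendsto' hlim hbound)

lemma HasMinkCDF.measure_singleton_cfVal_zero (hμ : HasMinkCDF μ) (hl : ∀ a ∈ l, 1 ≤ a) :
    μ {cfVal l 0} = 0 := by
  rcases eq_or_ne l [] with rfl | hne
  · rw [cfVal_nil, ← Icc_self, hμ 0 ⟨le_rfl, zero_le_one⟩, mink_zero, ENNReal.ofReal_zero]
  · obtain ⟨l', hl', ho, heq⟩ := exists_odd_length_cfVal_eq hl hne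
    rw [← heq]
    exact hμ.measure_singleton_cfVal_zero_of_odd hl' ho

lemma HasMinkCDF.measure_singleton_cfVal_one (hμ : HasMinkCDF μ) (hl : ∀ a ∈ l, 1 ≤ a) :
    μ {cfVal l 1} = 0 := by
  have h : cfVal l 1 = cfVal (l ++ [1]) 0 := by simp [cfVal_append]
  rw [h]
  refine hμ.measure_singleton_cfVal_zero fun a ha => ?_
  rcases List.mem_append.1 ha with ha | ha
  · exact hl a ha
  · exact (List.mem_singleton.1 ha).ge

lemma HasMinkCDF.measure_uIoc_cfVal (hμ : HasMinkCDF μ) (hl : ∀ a ∈ l, 1 ≤ a) :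
    μ (uIoc (cfVal l 0) (cfVal l 1)) = ENNReal.ofReal (2⁻¹ ^ l.sum) := by
  have h0 : (0 : ℝ) ∈ Icc 0 1 := ⟨le_rfl, zero_le_one⟩
  have h1 : (1 : ℝ) ∈ Icc 0 1 := ⟨zero_le_one, le_rfl⟩
  have hdiff := mink_cfVal_sub_mink_cfVal hl h0 h1
  rw [mink_one, mink_zero, sub_zero, mul_one] at hdiff
  have hmink0 := (mink_cfVal_mem_Icc hl h0 (by simp)).1
  have hmink1 := (mink_cfVal_mem_Icc hl h1 (by simp)).1
  rcases Nat.even_or_odd l.length with he | ho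
  · have hle := ((strictMonoOn_cfVal hl).1 he).monotoneOn h0.1 h1.1 zero_le_one
    rw [uIoc_of_le hle, hμ.measure_Ioc (cfVal_nonneg l le_rfl) hle (cfVal_mem_Icc hl h1).2 hmink0,
      hdiff, he.neg_one_pow, one_mul]
  · have hle := ((strictMonoOn_cfVal hl).2 ho).antitoneOn h0.1 h1.1 zero_le_one
    rw [uIoc_of_ge hle, hμ.measure_Ioc (cfVal_nonneg l zero_le_one) hle (cfVal_mem_Icc hl h0).2
      hmink1, ← neg_sub, hdiff, ho.neg_one_pow, neg_one_mul, neg_neg]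

lemma HasMinkCDF.measure_cfCylinder (hμ : HasMinkCDF μ) (hl : ∀ a ∈ l, 1 ≤ a) :
    μ (cfCylinder l) = 2⁻¹ ^ l.sum := by
  rw [measure_eq_measure_uIoc_of_uIoo_subset (uIoo_subset_cfCylinder hl)
    (cfCylinder_subset_uIcc hl) (hμ.measure_singleton_cfVal_zero hl)
    (hμ.measure_singleton_cfVal_one hl), hμ.measure_uIoc_cfVal hl,
    ENNReal.ofReal_pow (by norm_num), ENNReal.ofReal_inv_of_pos two_pos, ENNReal.ofReal_ofNat]

end MinkCDF

theorem minkMeasure_cylinder_general (μ : Measure ℝ)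
    (hdist : ∀ x ∈ Icc (0 : ℝ) 1, μ (Icc 0 x) = ENNReal.ofReal (mink x))
    (n : ℕ) (a : Fin n → ℕ) (ha : ∀ i, 1 ≤ a i) :
    μ {x : ℝ | x ∈ Ioo (0 : ℝ) 1 ∧ ∀ i : Fin n, cfDigit i x = a i} =
      2⁻¹ ^ (∑ i, a i) := by
  have hset : {x : ℝ | x ∈ Ioo (0 : ℝ) 1 ∧ ∀ i : Fin n, cfDigit i x = a i} =
      cfCylinder (List.ofFn a) := by
    ext x
    simp [cfCylinder, Fin.forall_iff]
  rw [hset, HasMinkCDF.measure_cfCylinder hdist (List.forall_mem_ofFn_iff.2 ha), List.sum_ofFn]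

/-- `μ` is the Bernoulli measure with weights `2^{-k}`: a continued-fraction cylinder
`[a_1,…,a_n]` has measure `2^{-(a_1+⋯+a_n)}`. -/
theorem minkMeasure_cylinder (μ : Measure ℝ) [IsProbabilityMeasure μ]
    (hdist : ∀ x ∈ Icc (0 : ℝ) 1, μ (Icc 0 x) = ENNReal.ofReal (mink x))
    (hsupp : μ (Icc (0 : ℝ) 1) = 1)
    (n : ℕ) (a : Fin n → ℕ) (ha : ∀ i, 1 ≤ a i) :
    μ {x : ℝ | x ∈ Ioo (0 : ℝ) 1 ∧ ∀ i : Fin n, cfDigit i x = a i} =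
      2⁻¹ ^ (∑ i, a i) :=
  minkMeasure_cylinder_general μ hdist n a ha
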